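/- arXiv:1012.4941 — 2 statements merged into one kernel-verified Lean document; each statement's English description precedes it below -/
import Mathlib

section
/- If a group Γ ≤ O_n(Z) of signed permutation matrices acts semi-transitively on {±e_1,...,±e_n} (two opposite orbits O and −O of length n each), then Γ is conjugate within O_n(Z) to a subgroup of the group of (unsigned) permutation matrices. -/
/-!
The orbit `O` of the semi-transitivity hypothesis contains exactly one of `eᵢ`, `-eᵢ` for each
`i`, say `sᵢ eᵢ` with `sᵢ = ±1`, because `O ≠ -O` and the orbit of `-eᵢ` is minus that of `eᵢ`.
Since `Γ` preserves `O = {sᵢ eᵢ}`, conjugating by the involution `diag(sᵢ)` makes `Γ` permute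
the standard basis vectors.
-/

open Matrix

def signedBasis (ι R : Type*) [DecidableEq ι] [Ring R] : Set (ι → R) :=
  {v | ∃ i, v = Pi.single i 1 ∨ v = -Pi.single i 1}

section

variable {ι R : Type*} [DecidableEq ι] [Ring R]

theorem single_mem_signedBasis (i : ι) : (Pi.single i 1 : ι → R) ∈ signedBasis ι R :=
  ⟨i, .inl rfl⟩

theorem neg_single_mem_signedBasis (i : ι) : -(Pi.single i 1 : ι → R) ∈ signedBasis ι R :=
  ⟨i, .inr rfl⟩

theorem units_smul_single_mem_signedBasis (u : ℤˣ) (i : ι) :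
    u • (Pi.single i 1 : ι → R) ∈ signedBasis ι R := by
  rcases Int.units_eq_one_or u with rfl | rfl
  · simpa using single_mem_signedBasis i
  · simpa using neg_single_mem_signedBasis i

theorem exists_signs_eq_range_of_subset_signedBasis {O : Set (ι → R)}
    (hO : O ⊆ signedBasis ι R) (hsome : ∀ i, Pi.single i 1 ∈ O ∨ -Pi.single i 1 ∈ O)
    (hnot : ∀ i, ¬(Pi.single i 1 ∈ O ∧ -Pi.single i 1 ∈ O)) :
    ∃ s : ι → ℤˣ, O = Set.range fun i => s i • (Pi.single i 1 : ι → R) := by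
  classical
  refine ⟨fun i => if Pi.single i 1 ∈ O then 1 else -1, Set.ext fun w => ⟨?_, ?_⟩⟩
  · intro hw
    obtain ⟨j, rfl | rfl⟩ := hO hw
    · exact ⟨j, by simp [hw]⟩
    · have hj : Pi.single j 1 ∉ O := fun h => hnot j ⟨h, hw⟩
      exact ⟨j, by simp [hj]⟩
  · rintro ⟨i, rfl⟩
    by_cases h : Pi.single i 1 ∈ O
    · simp [h]
    · simpa [h] using (hsome i).resolve_left h

variable [Fintype ι]

def signMatrix (s : ι → ℤˣ) : GL ι R :=
  have h : diagonal (fun i => ((s i : ℤ) : R)) * diagonal (fun i => ((s i : ℤ) : R)) = 1 := by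
    simp [diagonal_mul_diagonal, ← Int.cast_mul, ← Units.val_mul, Int.units_mul_self]
  ⟨_, _, h, h⟩

theorem signMatrix_inv (s : ι → ℤˣ) : (signMatrix s)⁻¹ = (signMatrix s : GL ι R) := rfl

theorem signMatrix_mulVec_single (s : ι → ℤˣ) (i : ι) :
    (signMatrix s : GL ι R).val *ᵥ Pi.single i 1 = s i • Pi.single i 1 := by
  ext k
  by_cases h : k = i
  · subst h
    simp [signMatrix, Units.smul_def]
  · simp [signMatrix, h]

theorem signMatrix_mulVec_units_smul_single (s : ι → ℤˣ) (i : ι) :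
    (signMatrix s : GL ι R).val *ᵥ (s i • Pi.single i 1) = Pi.single i 1 := by
  rw [mulVec_smul, signMatrix_mulVec_single, smul_smul, Int.units_mul_self, one_smul]

theorem signMatrix_mulVec_mem_signedBasis (s : ι → ℤˣ) {v : ι → R} (hv : v ∈ signedBasis ι R) :
    (signMatrix s : GL ι R).val *ᵥ v ∈ signedBasis ι R := by
  obtain ⟨i, rfl | rfl⟩ := hv
  · rw [signMatrix_mulVec_single]
    exact units_smul_single_mem_signedBasis _ i
  · rw [mulVec_neg, signMatrix_mulVec_single, ← Units.neg_smul]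
    exact units_smul_single_mem_signedBasis _ i

theorem exists_conj_signMatrix_mulVec_single_eq_single (s : ι → ℤˣ) {γ : GL ι R}
    (hγ : Set.MapsTo (γ.val *ᵥ ·) (Set.range fun i => s i • (Pi.single i 1 : ι → R))
      (Set.range fun i => s i • (Pi.single i 1 : ι → R))) (i : ι) :
    ∃ j, (signMatrix s * γ * (signMatrix s)⁻¹).val *ᵥ Pi.single i 1 = Pi.single j 1 := by
  obtain ⟨j, hj⟩ := hγ ⟨i, rfl⟩
  refine ⟨j, ?_⟩
  simp only [Units.val_mul, signMatrix_inv, ← mulVec_mulVec, signMatrix_mulVec_single]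
  rw [show γ.val *ᵥ (s i • Pi.single i 1) = s j • Pi.single j 1 from hj.symm,
    signMatrix_mulVec_units_smul_single]

end

section

variable {ι R : Type*} [Fintype ι] [DecidableEq ι] [Ring R] (Γ : Subgroup (GL ι R))

def vecOrbit (v : ι → R) : Set (ι → R) := {w | ∃ γ ∈ Γ, γ.val *ᵥ v = w}

theorem mem_vecOrbit_self (v : ι → R) : v ∈ vecOrbit Γ v :=
  ⟨1, Γ.one_mem, one_mulVec v⟩

theorem mulVec_mem_vecOrbit {γ : GL ι R} (hγ : γ ∈ Γ) {v w : ι → R} (hw : w ∈ vecOrbit Γ v) :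
    γ.val *ᵥ w ∈ vecOrbit Γ v := by
  obtain ⟨δ, hδ, rfl⟩ := hw
  exact ⟨γ * δ, Γ.mul_mem hγ hδ, by rw [Units.val_mul, mulVec_mulVec]⟩

theorem vecOrbit_eq_of_mem {v w : ι → R} (hw : w ∈ vecOrbit Γ v) : vecOrbit Γ w = vecOrbit Γ v := by
  obtain ⟨δ, hδ, rfl⟩ := hw
  refine Set.Subset.antisymm (fun u ⟨γ, hγ, hu⟩ => ?_) fun u ⟨γ, hγ, hu⟩ => ?_
  · exact ⟨γ * δ, Γ.mul_mem hγ hδ, by rw [Units.val_mul, ← mulVec_mulVec, hu]⟩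
  · refine ⟨γ * δ⁻¹, Γ.mul_mem hγ (Γ.inv_mem hδ), ?_⟩
    rw [mulVec_mulVec, ← Units.val_mul, inv_mul_cancel_right, hu]

theorem vecOrbit_neg (v : ι → R) : vecOrbit Γ (-v) = (fun y => -y) '' vecOrbit Γ v := by
  ext w
  constructor
  · rintro ⟨γ, hγ, rfl⟩
    exact ⟨γ.val *ᵥ v, ⟨γ, hγ, rfl⟩, (mulVec_neg _ _).symm⟩
  · rintro ⟨_, ⟨γ, hγ, rfl⟩, rfl⟩
    exact ⟨γ, hγ, mulVec_neg _ _⟩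

end

theorem semitransitive_conjugate_to_permutations_general
    (n : ℕ) (Γ : Subgroup (GL (Fin n) ℝ))
    (S : Set (Fin n → ℝ))
    (hS : S = {v | ∃ i : Fin n, v = Pi.single i 1 ∨ v = -Pi.single i 1})
    (hsigned : ∀ γ ∈ Γ, ∀ v ∈ S, γ.val.mulVec v ∈ S)
    (orb : (Fin n → ℝ) → Set (Fin n → ℝ))
    (horb : ∀ v, orb v = {w | ∃ γ ∈ Γ, γ.val.mulVec v = w})
    (hsemi : ∃ v ∈ S,
        (orb v).ncard = n ∧
        orb v ≠ (fun y => -y) '' orb v ∧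
        (∀ w ∈ S, orb w = orb v ∨ orb w = (fun y => -y) '' orb v)) :
    ∃ ε : GL (Fin n) ℝ,
      (∀ v ∈ S, ε.val.mulVec v ∈ S) ∧
      ∀ γ ∈ Γ, ∀ i : Fin n, ∃ j : Fin n,
        (ε * γ * ε⁻¹).val.mulVec (Pi.single i 1) = Pi.single j 1 := by
  obtain rfl : S = signedBasis (Fin n) ℝ := hS
  obtain rfl : orb = vecOrbit Γ := funext horb
  obtain ⟨v, hv, -, hne, hcover⟩ := hsemi
  have hsub : vecOrbit Γ v ⊆ signedBasis (Fin n) ℝ := fun _ ⟨γ, hγ, hw⟩ => hw ▸ hsigned γ hγ v hv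
  have hsome (i : Fin n) : Pi.single i 1 ∈ vecOrbit Γ v ∨ -Pi.single i 1 ∈ vecOrbit Γ v := by
    refine (hcover _ (single_mem_signedBasis i)).imp (fun h => ?_) fun h => ?_
    · exact h ▸ mem_vecOrbit_self Γ _
    · have hmem := mem_vecOrbit_self Γ (Pi.single i (1 : ℝ))
      rwa [h, Set.image_neg_eq_neg, Set.mem_neg] at hmem
  have hnot (i : Fin n) : ¬(Pi.single i 1 ∈ vecOrbit Γ v ∧ -Pi.single i 1 ∈ vecOrbit Γ v) :=
    fun ⟨hpos, hneg⟩ => hne <| by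
      simpa only [vecOrbit_eq_of_mem Γ hneg, vecOrbit_eq_of_mem Γ hpos] using
        vecOrbit_neg Γ (Pi.single i 1)
  obtain ⟨s, hs⟩ := exists_signs_eq_range_of_subset_signedBasis hsub hsome hnot
  refine ⟨signMatrix s, fun _ => signMatrix_mulVec_mem_signedBasis s, fun γ hγ => ?_⟩
  exact exists_conj_signMatrix_mulVec_single_eq_single s
    (hs ▸ fun _ hw => mulVec_mem_vecOrbit Γ hγ hw)

/-- If a group `Γ ≤ O_n(ℤ)` of signed permutation matrices acts
semi-transitively on `{±e_1,…,±e_n}` (two opposite orbits `O` and `−O` of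
length `n` each), then `Γ` is conjugate within `O_n(ℤ)` to a subgroup of the
group of (unsigned) permutation matrices. -/
theorem semitransitive_conjugate_to_permutations
    (n : ℕ) (hn : 0 < n) (Γ : Subgroup (GL (Fin n) ℝ))
    (S : Set (Fin n → ℝ))
    (hS : S = {v | ∃ i : Fin n, v = Pi.single i 1 ∨ v = -Pi.single i 1})
    (hsigned : ∀ γ ∈ Γ, ∀ v ∈ S, γ.val.mulVec v ∈ S)
    (orb : (Fin n → ℝ) → Set (Fin n → ℝ))
    (horb : ∀ v, orb v = {w | ∃ γ ∈ Γ, γ.val.mulVec v = w})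
    (hsemi : ∃ v ∈ S,
        (orb v).ncard = n ∧
        orb v ≠ (fun y => -y) '' orb v ∧
        (∀ w ∈ S, orb w = orb v ∨ orb w = (fun y => -y) '' orb v)) :
    ∃ ε : GL (Fin n) ℝ,
      (∀ v ∈ S, ε.val.mulVec v ∈ S) ∧
      ∀ γ ∈ Γ, ∀ i : Fin n, ∃ j : Fin n,
        (ε * γ * ε⁻¹).val.mulVec (Pi.single i 1) = Pi.single j 1 :=
  semitransitive_conjugate_to_permutations_general n Γ S hS hsigned orb horb hsemi
end

section
/- Let Γ ≤ Aut(LP(A,b,c)) be a finite group of automorphisms of a linear program, let E be a matrix whose kernel is Fix_Γ(R^n), and let (A'|b') be obtained from (A|b) by summing the rows within each Γ-orbit (Γ acting on rows via γ ↦ right multiplication by γ^{-t} on A and correspondingly on b). Then the polyhedron P' = {x : A'x ≤ b', Ex = 0} equals Fix_Γ(P(A,b)), the set of feasible points fixed by every element of Γ; moreover P' = {β(Γx) : x ∈ P(A,b)}. -/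
/-!
Averaging over `Γ`, `x ↦ β(Γx) = |Γ|⁻¹ ∑ γ x`, is a projection onto the `Γ`-fixed vectors; as
`P(A,b)` is convex and `Γ`-invariant, it maps `P(A,b)` into itself, so its image is
`Fix_Γ(P(A,b))`. On a fixed vector all rows of one orbit take the same value and share their
right-hand side, so each summed orbit inequality is the orbit size times a single row inequality;
together with `ker E = Fix_Γ(ℝⁿ)` this shows `P' = Fix_Γ(P(A,b))`.
-/

open Matrix Representation

namespace Representation

variable {𝕜 G V : Type*} [Field 𝕜] [Group G] [Fintype G]
  [AddCommGroup V] [Module 𝕜 V] [Invertible (Fintype.card G : 𝕜)] (ρ : Representation 𝕜 G V)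

theorem averageMap_apply (x : V) : averageMap ρ x = ⅟(Fintype.card G : 𝕜) • ∑ g : G, ρ g x := by
  simp [GroupAlgebra.average, map_sum]

variable [LinearOrder 𝕜] [IsStrictOrderedRing 𝕜]

theorem averageMap_mem_of_convex {s : Set V} (hs : Convex 𝕜 s) (hρs : ∀ g, ∀ x ∈ s, ρ g x ∈ s)
    {x : V} (hx : x ∈ s) : averageMap ρ x ∈ s := by
  rw [averageMap_apply, Finset.smul_sum]
  refine hs.sum_mem (fun _ _ ↦ invOf_nonneg.mpr (Nat.cast_nonneg _)) ?_ fun g _ ↦ hρs g x hx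
  rw [Finset.sum_const, Finset.card_univ, nsmul_eq_mul, mul_invOf_self]

theorem image_averageMap_of_convex {s : Set V} (hs : Convex 𝕜 s) (hρs : ∀ g, ∀ x ∈ s, ρ g x ∈ s) :
    averageMap ρ '' s = s ∩ invariants ρ := by
  ext y
  constructor
  · rintro ⟨x, hx, rfl⟩
    exact ⟨averageMap_mem_of_convex ρ hs hρs hx, averageMap_invariant ρ x⟩
  · rintro ⟨hy, hy_inv⟩
    exact ⟨y, hy, averageMap_id ρ y hy_inv⟩

end Representation

namespace Matrix

variable {𝕜 ι κ G : Type*} [Fintype ι]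

namespace GeneralLinearGroup

variable [CommRing 𝕜] [DecidableEq ι]

noncomputable def mulVecRep : Representation 𝕜 (GL ι 𝕜) (ι → 𝕜) :=
  toLinAlgEquiv'.toMonoidHom.comp (Units.coeHom _)

@[simp]
theorem mulVecRep_apply (γ : GL ι 𝕜) (x : ι → 𝕜) : mulVecRep γ x = γ.val *ᵥ x := rfl

end GeneralLinearGroup

theorem convex_setOf_mulVec_le [CommSemiring 𝕜] [PartialOrder 𝕜] [IsOrderedRing 𝕜]
    (A : Matrix κ ι 𝕜) (b : κ → 𝕜) : Convex 𝕜 {x | A *ᵥ x ≤ b} :=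
  convex_halfSpace_le A.mulVecLin.isLinear b

theorem sum_orbit_le_sum_orbit_iff [CommRing 𝕜] [LinearOrder 𝕜] [IsStrictOrderedRing 𝕜]
    [Group G] [Fintype G] [DecidableEq κ] (ρ : Representation 𝕜 G (ι → 𝕜))
    (π : G →* Equiv.Perm κ) {A : Matrix κ ι 𝕜} {b : κ → 𝕜}
    (hπA : ∀ γ i x, A (π γ i) ⬝ᵥ x = A i ⬝ᵥ ρ γ⁻¹ x) (hπb : ∀ γ i, b (π γ i) = b i)
    {x : ι → 𝕜} (hx : x ∈ invariants ρ) (i : κ) :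
    (∑ j ∈ Finset.univ.image (fun γ ↦ π γ i), A j ⬝ᵥ x
        ≤ ∑ j ∈ Finset.univ.image (fun γ ↦ π γ i), b j) ↔ A i ⬝ᵥ x ≤ b i := by
  set orbit := Finset.univ.image (fun γ ↦ π γ i)
  have hA : ∀ j ∈ orbit, A j ⬝ᵥ x = A i ⬝ᵥ x :=
    Finset.forall_mem_image.mpr fun γ _ ↦ by rw [hπA, hx]
  have hb : ∀ j ∈ orbit, b j = b i := Finset.forall_mem_image.mpr fun γ _ ↦ hπb γ i
  have horbit : orbit.Nonempty := ⟨i, Finset.mem_image.mpr ⟨1, Finset.mem_univ _, by simp⟩⟩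
  rw [Finset.sum_congr rfl hA, Finset.sum_congr rfl hb, Finset.sum_const, Finset.sum_const]
  exact nsmul_le_nsmul_iff_right (Finset.card_ne_zero.mpr horbit)

end Matrix

theorem reduced_polyhedron_is_fixed_feasible_set_general
    (m n p : ℕ) (A : Matrix (Fin m) (Fin n) ℝ) (b : Fin m → ℝ)
    (P : Set (Fin n → ℝ)) (hP : P = {x | A.mulVec x ≤ b})
    (Γ : Subgroup (GL (Fin n) ℝ)) [Fintype Γ]
    (hfeas : ∀ γ ∈ Γ, (fun x => γ.val.mulVec x) '' P = P)
    (π : Γ →* Equiv.Perm (Fin m))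
    (hπA : ∀ (γ : Γ) (i : Fin m) (x : Fin n → ℝ),
        A (π γ i) ⬝ᵥ x = A i ⬝ᵥ (γ⁻¹ : Γ).val.val.mulVec x)
    (hπb : ∀ (γ : Γ) (i : Fin m), b (π γ i) = b i)
    (E : Matrix (Fin p) (Fin n) ℝ)
    (hE : ∀ x : Fin n → ℝ, E.mulVec x = 0 ↔ ∀ γ ∈ Γ, γ.val.mulVec x = x)
    (P' : Set (Fin n → ℝ))
    (hP' : P' = {x | (∀ i : Fin m,
        (∑ j ∈ Finset.image (fun γ : Γ => π γ i) Finset.univ, A j ⬝ᵥ x)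
          ≤ ∑ j ∈ Finset.image (fun γ : Γ => π γ i) Finset.univ, b j) ∧
        E.mulVec x = 0}) :
    P' = {x ∈ P | ∀ γ ∈ Γ, γ.val.mulVec x = x} ∧
    P' = (fun x => (Fintype.card Γ : ℝ)⁻¹ •
        ∑ γ : Γ, (γ : GL (Fin n) ℝ).val.mulVec x) '' P := by
  subst hP
  let ρ : Representation ℝ Γ (Fin n → ℝ) := GeneralLinearGroup.mulVecRep.comp Γ.subtype
  have : Invertible (Fintype.card Γ : ℝ) := invertibleOfNonzero (by simp)
  have hfixed (x : Fin n → ℝ) : (∀ γ ∈ Γ, γ.val *ᵥ x = x) ↔ x ∈ invariants ρ := by simp [ρ]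
  have hρP (γ : Γ) (x : Fin n → ℝ) (hx : A *ᵥ x ≤ b) : A *ᵥ ρ γ x ≤ b :=
    (hfeas γ γ.2).subset ⟨x, hx, rfl⟩
  have hreduced : P' = {x | A *ᵥ x ≤ b} ∩ invariants ρ := by
    ext x
    rw [hP']
    simp only [Set.mem_ofPred_eq, Set.mem_inter_iff, SetLike.mem_coe, hE, hfixed]
    exact and_congr_left fun hx ↦ forall_congr' (sum_orbit_le_sum_orbit_iff ρ π hπA hπb hx)
  refine ⟨by simp only [hreduced, hfixed]; rfl, ?_⟩
  rw [hreduced, ← image_averageMap_of_convex ρ (convex_setOf_mulVec_le A b) hρP]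
  congr with x
  rw [averageMap_apply, invOf_eq_inv]
  rfl

/-- Let `Γ ≤ Aut(LP(A,b,c))` be a finite group of automorphisms of a linear
program which permutes the rows of `(A|b)` (via `π`), let `E` be a matrix whose
kernel is the fixed space `Fix_Γ(ℝⁿ)`, and let the system `A'x ≤ b'` be
obtained by summing the rows of `(A|b)` within each `Γ`-orbit.  Then the
polyhedron `P' = {x | A'x ≤ b', Ex = 0}` equals `Fix_Γ(P(A,b))`, the set of
feasible points fixed by every element of `Γ`; moreover `P'` is the image of
`P(A,b)` under the orbit-barycenter map `x ↦ β(Γx)`. -/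
theorem reduced_polyhedron_is_fixed_feasible_set
    (m n p : ℕ) (A : Matrix (Fin m) (Fin n) ℝ) (b : Fin m → ℝ) (c : Fin n → ℝ)
    (P : Set (Fin n → ℝ)) (hP : P = {x | A.mulVec x ≤ b})
    (Γ : Subgroup (GL (Fin n) ℝ)) [Fintype Γ]
    (hfeas : ∀ γ ∈ Γ, (fun x => γ.val.mulVec x) '' P = P)
    (hobj : ∀ γ ∈ Γ, ∀ x ∈ P, c ⬝ᵥ γ.val.mulVec x = c ⬝ᵥ x)
    (π : Γ →* Equiv.Perm (Fin m))
    (hπA : ∀ (γ : Γ) (i : Fin m) (x : Fin n → ℝ),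
        A (π γ i) ⬝ᵥ x = A i ⬝ᵥ (γ⁻¹ : Γ).val.val.mulVec x)
    (hπb : ∀ (γ : Γ) (i : Fin m), b (π γ i) = b i)
    (E : Matrix (Fin p) (Fin n) ℝ)
    (hE : ∀ x : Fin n → ℝ, E.mulVec x = 0 ↔ ∀ γ ∈ Γ, γ.val.mulVec x = x)
    (P' : Set (Fin n → ℝ))
    (hP' : P' = {x | (∀ i : Fin m,
        (∑ j ∈ Finset.image (fun γ : Γ => π γ i) Finset.univ, A j ⬝ᵥ x)
          ≤ ∑ j ∈ Finset.image (fun γ : Γ => π γ i) Finset.univ, b j) ∧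
        E.mulVec x = 0}) :
    P' = {x ∈ P | ∀ γ ∈ Γ, γ.val.mulVec x = x} ∧
    P' = (fun x => (Fintype.card Γ : ℝ)⁻¹ •
        ∑ γ : Γ, (γ : GL (Fin n) ℝ).val.mulVec x) '' P :=
  reduced_polyhedron_is_fixed_feasible_set_general m n p A b P hP Γ hfeas π hπA hπb E hE P' hP'
end
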